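/- Let P = C[x,y,z,w] with the Hermitian form making the monomials x^r y^s z^t w^u mutually orthogonal with squared norm r! s! t! u!. Define x* = (x+y+z+w)/2, y* = (x+y-z-w)/2, z* = (x-y+z-w)/2, w* = (x-y-z+w)/2. Then the monomials x*^r y*^s z*^t w*^u (r,s,t,u in N) are mutually orthogonal, with squared norm r! s! t! u!. -/

import Mathlib

open MvPolynomial

/-- The starred variables `x* , y*, z*, w*`. -/
noncomputable def starVar : Fin 4 → MvPolynomial (Fin 4) ℂ
  | 0 => C (1 / 2 : ℂ) * (X 0 + X 1 + X 2 + X 3)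
  | 1 => C (1 / 2 : ℂ) * (X 0 + X 1 - X 2 - X 3)
  | 2 => C (1 / 2 : ℂ) * (X 0 - X 1 + X 2 - X 3)
  | 3 => C (1 / 2 : ℂ) * (X 0 - X 1 - X 2 + X 3)

/-!
The Fischer form `B` is invariant under unitary linear changes of variables, and `x*, y*, z*, w*`
arise from `x, y, z, w` through the unitary matrix `H / 2`, `H` the 4 × 4 Hadamard matrix.

For invariance: on monomials one checks that multiplication by `Xⱼ` is `B`-adjoint to `∂ⱼ`, so
multiplication by `yᵢ = ∑ⱼ Uᵢⱼ Xⱼ` is adjoint to `Dᵢ = ∑ⱼ conj Uᵢⱼ ∂ⱼ`. Unitarity of `U` says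
`Dᵢ yₖ = δᵢₖ`, hence `Dᵢ ∘ φ = φ ∘ ∂ᵢ` for the substitution `φ : Xᵢ ↦ yᵢ`. Induction on `p` then
gives `B (φ (p * Xₖ)) (φ q) = B (φ p) (φ (∂ₖ q)) = B p (∂ₖ q) = B (p * Xₖ) q`.
-/

open scoped Nat

theorem Finsupp.prod_factorial_add_single {σ : Type*} [Fintype σ] [DecidableEq σ]
    (α : σ →₀ ℕ) (i : σ) :
    ∏ j, ((α + Finsupp.single i 1 : σ →₀ ℕ) j)! = (α i + 1) * ∏ j, (α j)! := by
  rw [Fintype.prod_eq_mul_prod_compl i, Fintype.prod_eq_mul_prod_compl i (fun j => (α j)!),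
    ← mul_assoc]
  congr 1
  · simp [Nat.factorial_succ]
  · refine Finset.prod_congr rfl fun j hj => ?_
    rw [Finsupp.add_apply,
      Finsupp.single_eq_of_ne (Finset.notMem_singleton.1 (Finset.mem_compl.1 hj)), add_zero]

namespace MvPolynomial

theorem monomial_eq_smul_monomial_one {σ R : Type*} [CommSemiring R] (α : σ →₀ ℕ) (a : R) :
    monomial α a = a • monomial α 1 := by
  rw [smul_monomial, smul_eq_mul, mul_one]

variable {σ R : Type*} [Fintype σ] [CommRing R]

noncomputable def linearForm (U : Matrix σ σ R) (i : σ) : MvPolynomial σ R :=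
  ∑ j, U i j • X j

theorem constantCoeff_aeval_linearForm (U : Matrix σ σ R) (q : MvPolynomial σ R) :
    constantCoeff (aeval (linearForm U) q) = constantCoeff q := by
  induction q using induction_on with
  | C a => rw [aeval_C, algebraMap_eq, constantCoeff_C]
  | add p q hp hq => rw [map_add, map_add, hp, hq, map_add]
  | mul_X p k _ => simp [linearForm]

variable [StarRing R]

noncomputable def adjointDeriv (U : Matrix σ σ R) (i : σ) :
    Derivation R (MvPolynomial σ R) (MvPolynomial σ R) :=
  ∑ j, star (U i j) • pderiv j

theorem adjointDeriv_apply (U : Matrix σ σ R) (i : σ) (q : MvPolynomial σ R) :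
    adjointDeriv U i q = ∑ j, star (U i j) • pderiv j q := by
  change Derivation.coeFnAddMonoidHom (∑ j, star (U i j) • pderiv j) q = _
  rw [map_sum, Finset.sum_apply]
  rfl

variable [DecidableEq σ] {U : Matrix σ σ R}

theorem adjointDeriv_linearForm (hU : U ∈ Matrix.unitaryGroup σ R) (i k : σ) :
    adjointDeriv U i (linearForm U k) = Pi.single (M := fun _ => MvPolynomial σ R) i 1 k := by
  have hki := congrFun₂ (Matrix.mem_unitaryGroup_iff.1 hU) k i
  simp only [Matrix.mul_apply, Matrix.star_apply, Matrix.one_apply] at hki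
  simp only [linearForm, map_sum, Derivation.map_smul, adjointDeriv_apply, pderiv_X,
    Pi.single_apply, smul_ite, smul_zero, Finset.sum_ite_eq, Finset.mem_univ, ↓reduceIte, smul_smul]
  rw [← Finset.sum_smul, hki, ite_smul, one_smul, zero_smul]

theorem adjointDeriv_aeval_linearForm (hU : U ∈ Matrix.unitaryGroup σ R) (i : σ)
    (q : MvPolynomial σ R) :
    adjointDeriv U i (aeval (linearForm U) q) = aeval (linearForm U) (pderiv i q) := by
  induction q using induction_on with
  | C a => rw [aeval_C, Derivation.map_algebraMap, pderiv_C, map_zero]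
  | add p q hp hq => rw [map_add, map_add, hp, hq, map_add, map_add]
  | mul_X p k hp =>
    rw [map_mul, aeval_X, Derivation.leibniz, hp, adjointDeriv_linearForm hU, Derivation.leibniz,
      map_add, pderiv_X]
    simp only [smul_eq_mul, map_mul, aeval_X, Pi.single_apply, apply_ite (aeval (linearForm U)),
      map_one, map_zero]

def IsFischerForm (B : MvPolynomial σ R →ₗ[R] MvPolynomial σ R →ₛₗ[starRingEnd R] R) : Prop :=
  ∀ α β : σ →₀ ℕ, B (monomial α 1) (monomial β 1) = if α = β then ∏ i, ((α i)! : R) else 0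

namespace IsFischerForm

variable {B : MvPolynomial σ R →ₗ[R] MvPolynomial σ R →ₛₗ[starRingEnd R] R}

theorem apply_X_mul (hB : IsFischerForm B) (i : σ) (p q : MvPolynomial σ R) :
    B (X i * p) q = B p (pderiv i q) := by
  suffices B.comp (LinearMap.mulLeft R (X i)) = B.compl₂ (pderiv i).toLinearMap from
    LinearMap.congr_fun₂ this p q
  refine LinearMap.ext_basis (basisMonomials σ R) (basisMonomials σ R) fun α β => ?_
  simp only [coe_basisMonomials, LinearMap.comp_apply, LinearMap.mulLeft_apply,
    LinearMap.compl₂_apply, Derivation.coeFn_coe, pderiv_monomial, one_mul, X, monomial_mul,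
    add_comm (Finsupp.single i 1) α]
  rw [monomial_eq_smul_monomial_one (β - _), LinearMap.map_smulₛₗ, starRingEnd_apply,
    star_natCast, smul_eq_mul, hB, hB]
  obtain ⟨β, rfl⟩ | hβ : (∃ β', β = β' + Finsupp.single i 1) ∨ β i = 0 := by
    rcases Nat.eq_zero_or_pos (β i) with h | h
    · exact .inr h
    · exact .inl ⟨β - Finsupp.single i 1, (tsub_add_cancel_of_le (Finsupp.single_le_iff.2 h)).symm⟩
  · simp only [add_left_inj, add_tsub_cancel_right]
    split_ifs with h
    · subst h
      rw [Finsupp.add_apply, Finsupp.single_eq_same, ← Nat.cast_prod, ← Nat.cast_prod,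
        ← Nat.cast_mul, Finsupp.prod_factorial_add_single]
    · rw [mul_zero]
  · rw [hβ, Nat.cast_zero, zero_mul, if_neg]
    rintro rfl
    simp at hβ

theorem apply_C_left (hB : IsFischerForm B) (a : R) (q : MvPolynomial σ R) :
    B (C a) q = a * star (constantCoeff q) := by
  induction q using induction_on' with
  | monomial β b =>
    rw [constantCoeff_monomial, C_apply, monomial_eq_smul_monomial_one 0 a,
      monomial_eq_smul_monomial_one β b, LinearMap.map_smul, LinearMap.smul_apply,
      LinearMap.map_smulₛₗ, hB]
    obtain rfl | hβ := eq_or_ne β 0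
    · simp [starRingEnd_apply]
    · simp [hβ, hβ.symm]
  | add p q hp hq => rw [map_add, map_add, hp, hq, star_add, mul_add]

theorem apply_linearForm_mul (hB : IsFischerForm B) (i : σ) (p q : MvPolynomial σ R) :
    B (linearForm U i * p) q = B p (adjointDeriv U i q) := by
  rw [linearForm, Finset.sum_mul, map_sum, LinearMap.sum_apply, adjointDeriv_apply, map_sum]
  refine Finset.sum_congr rfl fun j _ => ?_
  rw [smul_mul_assoc, map_smul, LinearMap.smul_apply, hB.apply_X_mul, LinearMap.map_smulₛₗ,
    starRingEnd_apply, star_star]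

theorem apply_aeval_linearForm (hB : IsFischerForm B) (hU : U ∈ Matrix.unitaryGroup σ R)
    (p q : MvPolynomial σ R) :
    B (aeval (linearForm U) p) (aeval (linearForm U) q) = B p q := by
  induction p using induction_on generalizing q with
  | C a =>
    rw [aeval_C, algebraMap_eq, hB.apply_C_left, hB.apply_C_left, constantCoeff_aeval_linearForm]
  | add p p' hp hp' => simp only [map_add, LinearMap.add_apply, hp, hp']
  | mul_X p k hp =>
    rw [map_mul, aeval_X, mul_comm, hB.apply_linearForm_mul, adjointDeriv_aeval_linearForm hU, hp,
      mul_comm, hB.apply_X_mul]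

end IsFischerForm

end MvPolynomial

noncomputable def starMatrix : Matrix (Fin 4) (Fin 4) ℂ :=
  (1 / 2 : ℂ) • !![1, 1, 1, 1; 1, 1, -1, -1; 1, -1, 1, -1; 1, -1, -1, 1]

theorem starMatrix_mem_unitaryGroup : starMatrix ∈ Matrix.unitaryGroup (Fin 4) ℂ := by
  rw [Matrix.mem_unitaryGroup_iff]
  ext i j
  fin_cases i <;> fin_cases j <;>
    simp [starMatrix, Matrix.mul_apply, Fin.sum_univ_four, map_ofNat] <;> norm_num

theorem starVar_eq_linearForm : starVar = linearForm starMatrix := by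
  funext i
  fin_cases i <;>
    simp [starVar, linearForm, starMatrix, Fin.sum_univ_four, smul_eq_C_mul, sub_eq_add_neg] <;>
    ring

theorem monomial_one_fin_four {R : Type*} [CommSemiring R] (α : Fin 4 →₀ ℕ) :
    (monomial α 1 : MvPolynomial (Fin 4) R) = X 0 ^ α 0 * X 1 ^ α 1 * X 2 ^ α 2 * X 3 ^ α 3 := by
  rw [← prod_X_pow_eq_monomial, Finset.prod_subset (Finset.subset_univ _) fun i _ hi => by
    rw [Finsupp.notMem_support_iff.1 hi, pow_zero], Fin.prod_univ_four]

theorem isFischerForm_of_fin_four {A : Type*} [CommRing A] [StarRing A]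
    {B : MvPolynomial (Fin 4) A →ₗ[A] MvPolynomial (Fin 4) A →ₛₗ[starRingEnd A] A}
    (hB : ∀ r s t u R S T U : ℕ,
      B (X 0 ^ r * X 1 ^ s * X 2 ^ t * X 3 ^ u) (X 0 ^ R * X 1 ^ S * X 2 ^ T * X 3 ^ U) =
        if r = R ∧ s = S ∧ t = T ∧ u = U then ((r ! * s ! * t ! * u ! : ℕ) : A) else 0) :
    IsFischerForm B := by
  intro α β
  rw [monomial_one_fin_four, monomial_one_fin_four, hB, Fin.prod_univ_four]
  simp [Finsupp.ext_iff, Fin.forall_fin_succ]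

/-- With respect to the Hermitian form making the monomials in `x,y,z,w` mutually
orthogonal with squared norms `r!s!t!u!`, the monomials in `x*,y*,z*,w*` are also
mutually orthogonal with squared norms `r!s!t!u!`. -/
theorem star_monomials_orthogonal
    (B : MvPolynomial (Fin 4) ℂ →ₗ[ℂ] MvPolynomial (Fin 4) ℂ →ₛₗ[starRingEnd ℂ] ℂ)
    (hB : ∀ r s t u R S T U : ℕ,
      B (X 0 ^ r * X 1 ^ s * X 2 ^ t * X 3 ^ u)
        (X 0 ^ R * X 1 ^ S * X 2 ^ T * X 3 ^ U) =
      if r = R ∧ s = S ∧ t = T ∧ u = U then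
        ((r.factorial * s.factorial * t.factorial * u.factorial : ℕ) : ℂ)
      else 0) :
    ∀ r s t u R S T U : ℕ,
      B (starVar 0 ^ r * starVar 1 ^ s * starVar 2 ^ t * starVar 3 ^ u)
        (starVar 0 ^ R * starVar 1 ^ S * starVar 2 ^ T * starVar 3 ^ U) =
      if r = R ∧ s = S ∧ t = T ∧ u = U then
        ((r.factorial * s.factorial * t.factorial * u.factorial : ℕ) : ℂ)
      else 0 := by
  intro r s t u R S T U
  have hsubst : ∀ a b c d : ℕ, starVar 0 ^ a * starVar 1 ^ b * starVar 2 ^ c * starVar 3 ^ d =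
      aeval (linearForm starMatrix)
        (X 0 ^ a * X 1 ^ b * X 2 ^ c * X 3 ^ d : MvPolynomial (Fin 4) ℂ) := by
    simp [starVar_eq_linearForm]
  rw [hsubst, hsubst, (isFischerForm_of_fin_four hB).apply_aeval_linearForm
    starMatrix_mem_unitaryGroup, hB]
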